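/- arXiv:1807.10450 — 5 statements merged into one kernel-verified Lean document; each statement's English description precedes it below -/
import Mathlib

section
/- Let m be a positive square-free integer. Then for all integers n ≥ 1, ρ(n,m) ≤ ⌈n/m⌉^(φ(m)/m − 1). -/
/-- `rho n m` is the proportion of permutations in `Sym(n)` whose order is coprime to `m`. -/
noncomputable def rho (n m : ℕ) : ℝ :=
  (Finset.univ.filter (fun π : Equiv.Perm (Fin n) => Nat.Coprime (orderOf π) m)).card /
    (Nat.factorial n : ℝ)

/-!
Classify `π ∈ Sym(n)` by the length `ℓ` of its cycle through a fixed point. If the order of `π`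
is coprime to `m`, so are `ℓ` and the order of the permutation of the remaining `n - ℓ` points;
the cycle itself can be chosen in `(n - 1)! / (n - ℓ)!` ways. Hence
`n ρ(n) ≤ ∑_{ℓ ≤ n, (ℓ, m) = 1} ρ(n - ℓ)`.

The bound `ρ(n) ≤ ⌈n/m⌉ ^ (α - 1)`, `α = φ(m)/m`, then follows by strong induction: grouping the
`n - ℓ` into blocks of `m` consecutive integers, each full block holds `φ(m)` admissible values,
and the resulting sum is controlled by Bernoulli's inequality
`α x ^ (α - 1) ≤ x ^ α - (x - 1) ^ α`, which telescopes.
-/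

open Equiv Equiv.Perm Finset Function
open scoped Nat

noncomputable def coprimeOrderPerms (α : Type*) [Fintype α] [DecidableEq α] (m : ℕ) :
    Finset (Perm α) :=
  {π | (orderOf π).Coprime m}

section CoprimeOrderPerms

variable {α β : Type*} [Fintype α] [DecidableEq α] [Fintype β] [DecidableEq β] {m : ℕ}

theorem mem_coprimeOrderPerms {π : Perm α} :
    π ∈ coprimeOrderPerms α m ↔ (orderOf π).Coprime m := by
  simp [coprimeOrderPerms]

theorem card_coprimeOrderPerms_congr (e : α ≃ β) :
    #(coprimeOrderPerms α m) = #(coprimeOrderPerms β m) :=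
  card_nbij' e.permCongrHom e.permCongrHom.symm
    (fun π hπ => by simpa only [mem_coe, mem_coprimeOrderPerms, MulEquiv.orderOf_eq] using hπ)
    (fun π hπ => by simpa only [mem_coe, mem_coprimeOrderPerms, MulEquiv.orderOf_eq] using hπ)
    (fun π _ => e.permCongrHom.symm_apply_apply π)
    (fun π _ => e.permCongrHom.apply_symm_apply π)

theorem card_coprimeOrderPerms_fixing_eq_subtype (S : Finset α) :
    #{τ ∈ coprimeOrderPerms α m | ∀ y ∈ S, τ y = y} =
      #(coprimeOrderPerms {y // y ∉ S} m) := by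
  have horder (σ : Perm {y // y ∉ S}) : orderOf (ofSubtype σ) = orderOf σ :=
    orderOf_injective _ ofSubtype_injective σ
  symm
  refine card_bij (fun σ _ => ofSubtype σ) (fun σ hσ => ?_)
    (fun σ _ σ' _ h => ofSubtype_injective h) (fun τ hτ => ?_)
  · rw [mem_coprimeOrderPerms] at hσ
    rw [mem_filter, mem_coprimeOrderPerms, horder]
    exact ⟨hσ, fun y hy => ofSubtype_apply_of_not_mem σ (not_not.2 hy)⟩
  · rw [mem_filter, mem_coprimeOrderPerms] at hτ
    let e := Perm.subtypeEquivSubtypePerm (fun y => y ∉ S)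
    have hτe : ofSubtype (e.symm ⟨τ, fun y hy => hτ.2 y (not_not.1 hy)⟩) = τ :=
      congrArg Subtype.val (e.apply_symm_apply _)
    refine ⟨_, ?_, hτe⟩
    rw [mem_coprimeOrderPerms, ← horder, hτe]
    exact hτ.1

theorem card_coprimeOrderPerms_fixing_eq_fin (S : Finset α) :
    #{τ ∈ coprimeOrderPerms α m | ∀ y ∈ S, τ y = y} =
      #(coprimeOrderPerms (Fin (Fintype.card α - #S)) m) := by
  rw [card_coprimeOrderPerms_fixing_eq_subtype,
    card_coprimeOrderPerms_congr (Fintype.equivFinOfCardEq _)]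
  rw [Fintype.card_subtype_compl, Fintype.card_coe]

end CoprimeOrderPerms

section CycleOfPoint

variable {α : Type*} {π π' : Perm α} {x y : α}

theorem Equiv.Perm.minimalPeriod_pos [Finite α] (π : Perm α) (x : α) : 0 < minimalPeriod π x :=
  IsPeriodicPt.minimalPeriod_pos (orderOf_pos π) (by simp [IsPeriodicPt, IsFixedPt, ← coe_pow])

theorem Equiv.Perm.minimalPeriod_dvd_orderOf (π : Perm α) (x : α) :
    minimalPeriod π x ∣ orderOf π :=
  IsPeriodicPt.minimalPeriod_dvd (by simp [IsPeriodicPt, IsFixedPt, ← coe_pow])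

theorem Equiv.Perm.pow_apply_injOn_Iio_minimalPeriod (π : Perm α) (x : α) :
    Set.InjOn (fun i => (π ^ i) x) (Set.Iio (minimalPeriod π x)) := by
  simpa only [coe_pow] using iterate_injOn_Iio_minimalPeriod

theorem Equiv.Perm.pow_apply_ne_self_of_lt_minimalPeriod {i : ℕ} (h0 : 0 < i)
    (hi : i < minimalPeriod π x) : (π ^ i) x ≠ x := fun h =>
  h0.ne' (pow_apply_injOn_Iio_minimalPeriod π x hi (h0.trans hi) (h.trans (by simp)))

theorem Equiv.Perm.exists_embedding_pow_succ_apply {k : ℕ} (hk : k < minimalPeriod π x) :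
    ∃ e : Fin k ↪ {y // y ≠ x}, Subtype.val ∘ e = fun i : Fin k => (π ^ (i + 1 : ℕ)) x := by
  have hne (i : Fin k) : (π ^ (i + 1 : ℕ)) x ≠ x :=
    pow_apply_ne_self_of_lt_minimalPeriod i.succ_pos (by omega)
  refine ⟨⟨fun i => ⟨_, hne i⟩, fun i j h => Fin.ext (Nat.succ_injective ?_)⟩, rfl⟩
  exact pow_apply_injOn_Iio_minimalPeriod π x (Set.mem_Iio.2 (by omega))
    (Set.mem_Iio.2 (by omega)) (congrArg Subtype.val h)

theorem Equiv.Perm.pow_apply_eq_of_minimalPeriod_eq {n : ℕ} (hn : 0 < n)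
    (hπ : minimalPeriod π x = n) (hπ' : minimalPeriod π' x = n)
    (h : ∀ i < n, (π ^ i) x = (π' ^ i) x) (i : ℕ) : (π ^ i) x = (π' ^ i) x := by
  simp only [coe_pow]
  rw [← iterate_mod_minimalPeriod_eq, ← iterate_mod_minimalPeriod_eq (f := π'), hπ, hπ',
    ← coe_pow, ← coe_pow]
  exact h _ (Nat.mod_lt _ hn)

theorem Equiv.Perm.cycleOf_eq_of_pow_apply_eq [Fintype α] [DecidableEq α]
    (h : ∀ i : ℕ, (π ^ i) x = (π' ^ i) x) :
    π.cycleOf x = π'.cycleOf x := by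
  have hsame {σ σ' : Perm α} (h : ∀ i : ℕ, (σ ^ i) x = (σ' ^ i) x) {y : α}
      (hy : σ.SameCycle x y) : σ'.SameCycle x y := by
    obtain ⟨i, -, rfl⟩ := hy.exists_pow_eq'
    rw [h]
    exact sameCycle_pow_right.2 (SameCycle.refl _ _)
  ext y
  by_cases hy : π.SameCycle x y
  · obtain ⟨i, -, rfl⟩ := hy.exists_pow_eq'
    rw [cycleOf_apply_apply_pow_self, h, h, cycleOf_apply_apply_pow_self]
  · rw [cycleOf_apply_of_not_sameCycle hy,
      cycleOf_apply_of_not_sameCycle fun hy' => hy (hsame (fun i => (h i).symm) hy')]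

theorem Equiv.Perm.cycleOf_inv_mul_apply_of_sameCycle [Fintype α] [DecidableEq α]
    (hy : π.SameCycle x y) :
    ((π.cycleOf x)⁻¹ * π) y = y :=
  Perm.inv_eq_iff_eq.2 hy.cycleOf_apply.symm

theorem Equiv.Perm.disjoint_cycleOf_inv_mul [Fintype α] [DecidableEq α] (π : Perm α) (x : α) :
    Disjoint (π.cycleOf x) ((π.cycleOf x)⁻¹ * π) := fun y =>
  if hy : π.SameCycle x y then Or.inr (cycleOf_inv_mul_apply_of_sameCycle hy)
  else Or.inl (cycleOf_apply_of_not_sameCycle hy)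

theorem Equiv.Perm.eq_of_pow_apply_eq_of_cycleOf_inv_mul_eq [Fintype α] [DecidableEq α]
    {n : ℕ} (hn : 0 < n) (hπ : minimalPeriod π x = n) (hπ' : minimalPeriod π' x = n)
    (h : ∀ i < n, (π ^ i) x = (π' ^ i) x)
    (hτ : (π.cycleOf x)⁻¹ * π = (π'.cycleOf x)⁻¹ * π') : π = π' := by
  have hc := cycleOf_eq_of_pow_apply_eq (pow_apply_eq_of_minimalPeriod_eq hn hπ hπ' h)
  calc π = π.cycleOf x * ((π.cycleOf x)⁻¹ * π) := (mul_inv_cancel_left _ _).symm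
    _ = π'.cycleOf x * ((π'.cycleOf x)⁻¹ * π') := by rw [hτ, hc]
    _ = π' := mul_inv_cancel_left _ _

theorem Equiv.Perm.orderOf_cycleOf_inv_mul_dvd [Fintype α] [DecidableEq α] (π : Perm α)
    (x : α) :
    orderOf ((π.cycleOf x)⁻¹ * π) ∣ orderOf π := by
  conv_rhs => rw [← mul_inv_cancel_left (π.cycleOf x) π]
  rw [(disjoint_cycleOf_inv_mul π x).orderOf]
  exact Nat.dvd_lcm_right _ _

end CycleOfPoint

section Recurrence

variable {α : Type*} [Fintype α] [DecidableEq α] {m : ℕ}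

theorem card_filter_minimalPeriod_eq_le (x : α) {N : ℕ} (hα : Fintype.card α = N + 1)
    (k : ℕ) :
    #((coprimeOrderPerms α m).filter (fun π : Perm α => minimalPeriod π x = k + 1)) ≤
      N.descFactorial k * #(coprimeOrderPerms (Fin (N - k)) m) := by
  let F := (coprimeOrderPerms α m).filter (fun π : Perm α => minimalPeriod π x = k + 1)
  let orbit (w : Fin k → α) : Finset α := insert x (univ.image w)
  let W : Finset (Fin k → α) := univ.image fun e : Fin k ↪ {y // y ≠ x} => Subtype.val ∘ e
  let T (w : Fin k → α) : Finset (Perm α) :=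
    {τ ∈ coprimeOrderPerms α m | ∀ y ∈ orbit w, τ y = y}
  -- `π` is recovered from the first `k` points after `x` on its cycle through `x` and from
  -- `(π.cycleOf x)⁻¹ * π`, which fixes that cycle pointwise.
  let Φ (π : Perm α) : Σ _ : Fin k → α, Perm α :=
    ⟨fun i => (π ^ (i + 1 : ℕ)) x, (π.cycleOf x)⁻¹ * π⟩
  have hval : Injective fun e : Fin k ↪ {y // y ≠ x} => Subtype.val ∘ e :=
    fun e e' h => DFunLike.ext _ _ fun i => Subtype.val_injective (congrFun h i)
  have hW : #W = N.descFactorial k := by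
    rw [card_image_of_injective _ hval, card_univ, Fintype.card_embedding_eq, Fintype.card_fin,
      Fintype.card_subtype_compl, hα, Fintype.card_unique, Nat.add_sub_cancel]
  have hT : ∀ w ∈ W, #(T w) = #(coprimeOrderPerms (Fin (N - k)) m) := by
    intro w hw
    obtain ⟨e, -, rfl⟩ := mem_image.1 hw
    have horbit : #(orbit (Subtype.val ∘ e)) = k + 1 := by
      rw [card_insert_of_notMem (by simpa using fun i => (e i).2),
        card_image_of_injective _ (Subtype.val_injective.comp e.injective), card_univ,
        Fintype.card_fin]
    rw [card_coprimeOrderPerms_fixing_eq_fin, horbit, hα, Nat.add_sub_add_right]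
  have hmaps : Set.MapsTo Φ F (W.sigma T) := by
    intro π hπ
    simp only [F, coe_filter, Set.mem_ofPred_eq, mem_coprimeOrderPerms] at hπ
    obtain ⟨e, he⟩ := exists_embedding_pow_succ_apply (π := π) (x := x) (k := k) (by omega)
    refine mem_sigma.2 ⟨mem_image.2 ⟨e, mem_univ _, he⟩, ?_⟩
    refine mem_filter.2 ⟨mem_coprimeOrderPerms.2
      (hπ.1.coprime_dvd_left (orderOf_cycleOf_inv_mul_dvd π x)), fun y hy => ?_⟩
    rcases mem_insert.1 hy with rfl | hy
    · exact cycleOf_inv_mul_apply_of_sameCycle (SameCycle.refl _ _)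
    · obtain ⟨i, -, rfl⟩ := mem_image.1 hy
      exact cycleOf_inv_mul_apply_of_sameCycle (sameCycle_pow_right.2 (SameCycle.refl _ _))
  have hinj : Set.InjOn Φ F := by
    intro π hπ π' hπ' h
    simp only [F, coe_filter, Set.mem_ofPred_eq] at hπ hπ'
    obtain ⟨hw, hτ⟩ := Sigma.mk.inj_iff.1 h
    refine eq_of_pow_apply_eq_of_cycleOf_inv_mul_eq k.succ_pos hπ.2 hπ'.2 ?_ (eq_of_heq hτ)
    rintro (_ | i) hi
    · rfl
    · exact congrFun hw ⟨i, by omega⟩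
  calc #F ≤ #(W.sigma T) := card_le_card_of_injOn Φ hmaps hinj
    _ = N.descFactorial k * #(coprimeOrderPerms (Fin (N - k)) m) := by
      rw [card_sigma, sum_congr rfl hT, sum_const, hW, smul_eq_mul]

theorem card_coprimeOrderPerms_le_sum (x : α) {N : ℕ} (hα : Fintype.card α = N + 1) :
    #(coprimeOrderPerms α m) ≤ ∑ j ∈ (range (N + 1)).filter (fun j => (N + 1 - j).Coprime m),
      N.descFactorial (N - j) * #(coprimeOrderPerms (Fin j) m) := by
  have hpos (π : Perm α) := minimalPeriod_pos π x
  have hle (π : Perm α) : minimalPeriod π x ≤ N + 1 := hα ▸ minimalPeriod_le_card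
  have hmaps : Set.MapsTo (fun π : Perm α => N + 1 - minimalPeriod π x) (coprimeOrderPerms α m)
      ((range (N + 1)).filter (fun j => (N + 1 - j).Coprime m)) := by
    intro π hπ
    refine mem_coe.2 (mem_filter.2 ⟨mem_range.2 (by dsimp only; have := hpos π; omega), ?_⟩)
    rw [Nat.sub_sub_self (hle π)]
    exact (mem_coprimeOrderPerms.1 hπ).coprime_dvd_left (minimalPeriod_dvd_orderOf π x)
  rw [card_eq_sum_card_fiberwise hmaps]
  refine sum_le_sum fun j hj => ?_
  have hj : j ≤ N := Nat.lt_succ_iff.1 (mem_range.1 (mem_filter.1 hj).1)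
  have hfiber :
      (coprimeOrderPerms α m).filter (fun π : Perm α => N + 1 - minimalPeriod π x = j) =
      (coprimeOrderPerms α m).filter (fun π : Perm α => minimalPeriod π x = N - j + 1) :=
    filter_congr fun π _ => by have := hpos π; have := hle π; omega
  have h := card_filter_minimalPeriod_eq_le (m := m) x hα (N - j)
  rwa [Nat.sub_sub_self hj, ← hfiber] at h

end Recurrence

section Rho

variable {m : ℕ}

theorem rho_eq_card_div (n : ℕ) : rho n m = #(coprimeOrderPerms (Fin n) m) / (n ! : ℝ) := rfl

theorem rho_le_one (n : ℕ) : rho n m ≤ 1 := by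
  rw [rho_eq_card_div, div_le_one (by positivity)]
  exact_mod_cast (card_le_univ _).trans_eq (by rw [Fintype.card_perm, Fintype.card_fin])

theorem rho_succ_le (N : ℕ) :
    (N + 1 : ℝ) * rho (N + 1) m ≤
      ∑ j ∈ (range (N + 1)).filter (fun j => (N + 1 - j).Coprime m), rho j m := by
  have hcount := card_coprimeOrderPerms_le_sum (m := m) (0 : Fin (N + 1)) (Fintype.card_fin _)
  have hterm : ∀ j ∈ (range (N + 1)).filter (fun j => (N + 1 - j).Coprime m),
      (N.descFactorial (N - j) * #(coprimeOrderPerms (Fin j) m) : ℝ) / N ! = rho j m := by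
    intro j hj
    have hj : j ≤ N := Nat.lt_succ_iff.1 (mem_range.1 (mem_filter.1 hj).1)
    have hfac := Nat.factorial_mul_descFactorial (Nat.sub_le N j)
    rw [Nat.sub_sub_self hj] at hfac
    rw [rho_eq_card_div, ← hfac]
    push_cast
    field_simp
  calc (N + 1 : ℝ) * rho (N + 1) m = #(coprimeOrderPerms (Fin (N + 1)) m) / (N ! : ℝ) := by
        rw [rho_eq_card_div, Nat.factorial_succ]
        push_cast
        field_simp
    _ ≤ (∑ j ∈ (range (N + 1)).filter (fun j => (N + 1 - j).Coprime m),
          N.descFactorial (N - j) * #(coprimeOrderPerms (Fin j) m) : ℕ) / (N ! : ℝ) :=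
        div_le_div_of_nonneg_right (by exact_mod_cast hcount) (by positivity)
    _ = _ := by
        push_cast
        rw [sum_div]
        exact sum_congr rfl hterm

end Rho

section RpowEstimates

open Real

variable {p : ℝ}

theorem mul_rpow_sub_one_le_rpow_sub_rpow (hp0 : 0 ≤ p) (hp1 : p ≤ 1) {x : ℝ} (hx : 1 ≤ x) :
    p * x ^ (p - 1) ≤ x ^ p - (x - 1) ^ p := by
  have hx0 : 0 < x := by linarith
  have hinv : 1 / x ≤ 1 := div_le_one_of_le₀ hx hx0.le
  have hbern : (1 - 1 / x) ^ p ≤ 1 - p / x := by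
    have := rpow_one_add_le_one_add_mul_self (s := -(1 / x)) (by linarith) hp0 hp1
    convert this using 1 <;> ring_nf
  have hsplit : (x - 1) ^ p = x ^ p * (1 - 1 / x) ^ p := by
    rw [← mul_rpow hx0.le (by linarith)]
    congr 1
    field_simp
  have hmul := mul_le_mul_of_nonneg_left hbern (rpow_nonneg hx0.le p)
  rw [hsplit, rpow_sub_one hx0.ne']
  have : x ^ p * (1 - p / x) = x ^ p - p * (x ^ p / x) := by ring
  linarith

theorem mul_sum_rpow_sub_one_le (hp0 : 0 ≤ p) (hp1 : p ≤ 1) {d : ℕ} (hd : 1 ≤ d) :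
    p * ∑ i ∈ range d, ((i : ℝ) + 1) ^ (p - 1) ≤ (d : ℝ) ^ p - (1 - p) := by
  induction d, hd using Nat.le_induction with
  | base => simp
  | succ d _ ih =>
    have hstep := mul_rpow_sub_one_le_rpow_sub_rpow hp0 hp1 (x := d + 1) (by simp)
    rw [add_sub_cancel_right] at hstep
    rw [sum_range_succ, mul_add]
    push_cast
    linarith

end RpowEstimates

section Bound

open Real

variable {m : ℕ}

theorem one_add_totient_mul_sum_le (hm : 0 < m) (d : ℕ) :
    1 + φ m * ∑ i ∈ range d, ((i : ℝ) + 1) ^ ((φ m : ℝ) / m - 1) ≤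
      (m * d + 1) * ((d : ℝ) + 1) ^ ((φ m : ℝ) / m - 1) := by
  set p : ℝ := (φ m : ℝ) / m with hp
  have hm' : (0 : ℝ) < m := by exact_mod_cast hm
  have hp0 : 0 ≤ p := by positivity
  have hp1 : p ≤ 1 := div_le_one_of_le₀ (by exact_mod_cast Nat.totient_le m) hm'.le
  have hφ : (φ m : ℝ) = m * p := by rw [hp]; field_simp
  set g := ((d : ℝ) + 1) ^ (p - 1) with hg
  -- the telescoped Bernoulli bounds leave exactly this error term
  have hsign : (1 + φ m - m) * (1 - g) ≤ 0 := by
    rcases Nat.lt_or_ge 1 m with h1 | h1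
    · have : (φ m : ℝ) + 1 ≤ m := by exact_mod_cast Nat.totient_lt m h1
      exact mul_nonpos_of_nonpos_of_nonneg (by linarith)
        (sub_nonneg.2 (rpow_le_one_of_one_le_of_nonpos (by simp) (by linarith)))
    · obtain rfl : m = 1 := by omega
      simp [hg, hp]
  rcases Nat.eq_zero_or_pos d with rfl | hd
  · simp [hg]
  have hsum := mul_le_mul_of_nonneg_left (mul_sum_rpow_sub_one_le hp0 hp1 hd) hm'.le
  have hlast := mul_rpow_sub_one_le_rpow_sub_rpow hp0 hp1 (x := d + 1) (by simp)
  rw [add_sub_cancel_right] at hlast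
  have hpow : ((d : ℝ) + 1) ^ p = (d + 1) * g := by
    rw [hg, rpow_sub_one (by positivity)]
    field_simp
  have hlast' := mul_le_mul_of_nonneg_left hlast hm'.le
  have hpow' := congrArg ((m : ℝ) * ·) hpow
  rw [hφ] at hsign ⊢
  linarith

theorem card_filter_coprime_sub_Ioc_le (a n : ℕ) (h : a + m ≤ n) :
    #((Ioc a (a + m)).filter (fun j => (n - j).Coprime m)) ≤ φ m := by
  rw [← Nat.filter_coprime_Ico_eq_totient m (n - (a + m))]
  refine card_le_card_of_injOn (n - ·) (fun j hj => ?_) (fun j hj j' hj' hjj => ?_)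
  · simp only [coe_filter, mem_Ioc, Set.mem_ofPred_eq] at hj ⊢
    simp only [mem_Ico]
    exact ⟨⟨by omega, by omega⟩, hj.2.symm⟩
  · simp only [coe_filter, mem_Ioc, Set.mem_ofPred_eq] at hj hj'
    simp only at hjj
    omega

theorem ceilDiv_eq_add_one_iff (hm : 0 < m) {i j : ℕ} :
    j ⌈/⌉ m = i + 1 ↔ m * i < j ∧ j ≤ m * (i + 1) := by
  rw [le_antisymm_iff, ceilDiv_le_iff_le_mul hm, Nat.succ_le_iff, ← not_le,
    ceilDiv_le_iff_le_mul hm, not_le, and_comm]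

theorem sum_filter_coprime_sub_le (hm : 0 < m) {n d : ℕ} (hlo : m * d < n)
    (hhi : n ≤ m * (d + 1)) {f g : ℕ → ℝ} (hg : ∀ i, 0 ≤ g i) (hf0 : f 0 ≤ 1)
    (hf : ∀ i j, j < n → m * i < j → j ≤ m * (i + 1) → f j ≤ g i) :
    ∑ j ∈ (range n).filter (fun j => (n - j).Coprime m), f j ≤
      1 + φ m * ∑ i ∈ range d, g i + ((n : ℝ) - 1 - m * d) * g d := by
  set J := (range n).filter (fun j => (n - j).Coprime m)
  have hmaps : ∀ j ∈ J, j ⌈/⌉ m ∈ range (d + 2) := fun j hj => by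
    rw [mem_range, Nat.lt_succ_iff, ceilDiv_le_iff_le_mul hm]
    have := mem_range.1 (mem_filter.1 hj).1
    omega
  rw [← sum_fiberwise_of_maps_to hmaps, sum_range_succ, sum_range_succ']
  have hblock (i : ℕ) : ∑ j ∈ J.filter (· ⌈/⌉ m = i + 1), f j ≤
      #(J.filter (· ⌈/⌉ m = i + 1)) * g i := by
    rw [← nsmul_eq_mul]
    refine sum_le_card_nsmul _ _ _ fun j hj => ?_
    obtain ⟨hjJ, hji⟩ := mem_filter.1 hj
    rw [ceilDiv_eq_add_one_iff hm] at hji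
    exact hf i j (mem_range.1 (mem_filter.1 hjJ).1) hji.1 hji.2
  have hzero : ∑ j ∈ J.filter (· ⌈/⌉ m = 0), f j ≤ 1 := by
    have hsub : J.filter (· ⌈/⌉ m = 0) ⊆ {0} := fun j hj => by
      have := (ceilDiv_le_iff_le_mul hm).1 (mem_filter.1 hj).2.le
      rw [mem_singleton]
      omega
    calc _ ≤ #(J.filter (· ⌈/⌉ m = 0)) • (1 : ℝ) :=
          sum_le_card_nsmul _ _ _ fun j hj => by rw [mem_singleton.1 (hsub hj)]; exact hf0
      _ ≤ 1 := by simpa using card_le_card hsub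
  have hfull : ∑ i ∈ range d, ∑ j ∈ J.filter (· ⌈/⌉ m = i + 1), f j ≤
      φ m * ∑ i ∈ range d, g i := by
    rw [mul_sum]
    refine sum_le_sum fun i hi => (hblock i).trans (mul_le_mul_of_nonneg_right ?_ (hg i))
    have hsub : J.filter (· ⌈/⌉ m = i + 1) ⊆ (Ioc (m * i) (m * i + m)).filter
        (fun j => (n - j).Coprime m) := fun j hj => by
      obtain ⟨hjJ, hji⟩ := mem_filter.1 hj
      rw [ceilDiv_eq_add_one_iff hm] at hji
      exact mem_filter.2 ⟨mem_Ioc.2 ⟨hji.1, by linarith⟩, (mem_filter.1 hjJ).2⟩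
    have hin : m * i + m ≤ n := by
      have := Nat.mul_le_mul_left m (mem_range.1 hi)
      rw [Nat.mul_succ] at this
      omega
    exact_mod_cast (card_le_card hsub).trans (card_filter_coprime_sub_Ioc_le _ n hin)
  have hlast :
      ∑ j ∈ J.filter (· ⌈/⌉ m = d + 1), f j ≤ ((n : ℝ) - 1 - m * d) * g d := by
    refine (hblock d).trans (mul_le_mul_of_nonneg_right ?_ (hg d))
    have hsub : J.filter (· ⌈/⌉ m = d + 1) ⊆ Ioo (m * d) n := fun j hj => by
      obtain ⟨hjJ, hjd⟩ := mem_filter.1 hj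
      rw [ceilDiv_eq_add_one_iff hm] at hjd
      exact mem_Ioo.2 ⟨hjd.1, mem_range.1 (mem_filter.1 hjJ).1⟩
    have hcard := (card_le_card hsub).trans_eq (Nat.card_Ioo _ _)
    have : #(J.filter (· ⌈/⌉ m = d + 1)) + 1 + m * d ≤ n := by omega
    have : (#(J.filter (· ⌈/⌉ m = d + 1)) : ℝ) + 1 + m * d ≤ n := by exact_mod_cast this
    linarith
  linarith

theorem rho_le_rpow_of_mul_lt_of_le_mul (hm : 0 < m) {n d : ℕ} (hlo : m * d < n)
    (hhi : n ≤ m * (d + 1)) : rho n m ≤ ((d : ℝ) + 1) ^ ((φ m : ℝ) / m - 1) := by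
  induction n using Nat.strong_induction_on generalizing d with
  | _ n ih =>
  obtain ⟨N, rfl⟩ : ∃ N, n = N + 1 := ⟨n - 1, by omega⟩
  have hsum := sum_filter_coprime_sub_le hm hlo hhi (f := (rho · m))
    (g := fun i => ((i : ℝ) + 1) ^ ((φ m : ℝ) / m - 1)) (fun i => by positivity) (rho_le_one 0)
    (fun i j hj hjlo hjhi => ih j hj hjlo hjhi)
  have hcrux := one_add_totient_mul_sum_le hm d
  have hrec := rho_succ_le (m := m) N
  have : (N + 1 : ℝ) * rho (N + 1) m ≤ (N + 1) * ((d : ℝ) + 1) ^ ((φ m : ℝ) / m - 1) := by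
    push_cast at hsum
    linarith
  exact le_of_mul_le_mul_left this (by positivity)

end Bound

theorem stmt_1_general (m : ℕ) (hm : 0 < m) :
    ∀ n : ℕ, 1 ≤ n →
      rho n m ≤ ((⌈(n : ℝ) / m⌉ : ℝ)) ^ ((Nat.totient m : ℝ) / m - 1) := by
  intro n hn
  have hm' : (0 : ℝ) < m := by exact_mod_cast hm
  obtain ⟨d, hd⟩ : ∃ d : ℕ, ⌈(n : ℝ) / m⌉ = d + 1 :=
    ⟨(⌈(n : ℝ) / m⌉ - 1).toNat, by
      have : 0 < ⌈(n : ℝ) / m⌉ := Int.ceil_pos.2 (by positivity)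
      omega⟩
  obtain ⟨hlo, hhi⟩ := Int.ceil_eq_iff.1 hd
  push_cast at hlo hhi
  rw [add_sub_cancel_right, lt_div_iff₀ hm'] at hlo
  rw [div_le_iff₀ hm'] at hhi
  rw [hd]
  push_cast
  exact rho_le_rpow_of_mul_lt_of_le_mul hm (by exact_mod_cast hlo.trans_eq' (mul_comm _ _))
    (by exact_mod_cast hhi.trans_eq (mul_comm _ _))

theorem stmt_1 (m : ℕ) (hm : 0 < m) (hsf : Squarefree m) :
    ∀ n : ℕ, 1 ≤ n →
      rho n m ≤ ((⌈(n : ℝ) / m⌉ : ℝ)) ^ ((Nat.totient m : ℝ) / m - 1) :=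
  stmt_1_general m hm
end

section
/- Let m be a positive integer. For all integers n ≥ 1, n·ρ(n,m) = Σ_{1 ≤ k ≤ n, gcd(k,m)=1} ρ(n−k,m). -/
open Equiv (Perm)
open Finset Nat

theorem Nat.Coprime.lcm_left {a b m : ℕ} (ha : a.Coprime m) (hb : b.Coprime m) :
    (a.lcm b).Coprime m :=
  (Nat.Coprime.mul_left ha hb).coprime_dvd_left (Nat.lcm_dvd_mul a b)

theorem Finset.sum_filter_mem_eq_sum_choose {α M : Type*} [Fintype α] [DecidableEq α]
    [AddCommMonoid M] (a : α) (f : ℕ → M) :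
    ∑ s : Finset α with a ∈ s, f #s =
      ∑ k ∈ Icc 1 (Fintype.card α), (Fintype.card α - 1).choose (k - 1) • f k := by
  have hα : #(univ.erase a) + 1 = Fintype.card α := by
    rw [card_erase_add_one (mem_univ a), card_univ]
  calc ∑ s : Finset α with a ∈ s, f #s
      = ∑ t ∈ (univ.erase a).powerset, f (#t + 1) := by
        refine sum_nbij' (erase · a) (insert a) ?_ ?_ ?_ ?_ ?_ <;> intro s hs <;>
          simp only [mem_filter, mem_univ, true_and, mem_powerset] at hs ⊢
        · exact erase_subset_erase a (subset_univ s)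
        · exact mem_insert_self a s
        · exact insert_erase hs
        · exact erase_insert fun h => by simpa using hs h
        · rw [card_erase_add_one hs]
    _ = ∑ k ∈ Icc 1 (Fintype.card α), (Fintype.card α - 1).choose (k - 1) • f k := by
        rw [sum_powerset_apply_card (f <| · + 1), hα, ← Nat.sub_eq_of_eq_add hα.symm]
        refine sum_nbij' (· + 1) (· - 1) ?_ ?_ ?_ ?_ ?_ <;> intro k hk <;> simp at hk ⊢ <;> omega

section subtypeCongr

variable {β : Type*} {p : β → Prop}

theorem Equiv.Perm.orderOf_subtypePerm_dvd (f : Perm β) (h : ∀ x, p (f x) ↔ p x) :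
    orderOf (f.subtypePerm h) ∣ orderOf f :=
  orderOf_dvd_of_pow_eq_one <| by ext; simp [pow_orderOf_eq_one]

variable [DecidablePred p]

theorem Equiv.Perm.orderOf_subtypeCongr (c : Perm {x // p x}) (σ : Perm {x // ¬ p x}) :
    orderOf (c.subtypeCongr σ) = (orderOf c).lcm (orderOf σ) := by
  change orderOf (Perm.subtypeCongrHom p (c, σ)) = _
  rw [orderOf_injective _ (Perm.subtypeCongrHom_injective p), Prod.orderOf]

theorem Equiv.Perm.subtypeCongr_apply_iff (c : Perm {x // p x}) (σ : Perm {x // ¬ p x}) (x : β) :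
    p (c.subtypeCongr σ x) ↔ p x := by
  by_cases hx : p x
  · simpa [subtypeCongr.left_apply _ _ hx, hx] using (c ⟨x, hx⟩).2
  · simpa [subtypeCongr.right_apply _ _ hx, hx] using (σ ⟨x, hx⟩).2

theorem Equiv.Perm.subtypePerm_subtypeCongr_left (c : Perm {x // p x}) (σ : Perm {x // ¬ p x}) :
    (c.subtypeCongr σ).subtypePerm (subtypeCongr_apply_iff c σ) = c := by
  ext x; simp [subtypeCongr.left_apply _ _ x.2]

theorem Equiv.Perm.subtypePerm_subtypeCongr_right (c : Perm {x // p x}) (σ : Perm {x // ¬ p x}) :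
    (c.subtypeCongr σ).subtypePerm (fun x => not_congr (subtypeCongr_apply_iff c σ x)) = σ := by
  ext x; simp [subtypeCongr.right_apply _ _ x.2]

theorem Equiv.Perm.subtypeCongr_subtypePerm (f : Perm β) (h : ∀ x, p (f x) ↔ p x) :
    (f.subtypePerm h).subtypeCongr (f.subtypePerm fun x => not_congr (h x)) = f := by
  ext x; by_cases hx : p x <;> simp [subtypeCongr.left_apply, subtypeCongr.right_apply, hx]

end subtypeCongr

section IsCycleOn

variable {α : Type*}

theorem Equiv.Perm.isCycleOn_iff_subtypePerm (f : Perm α) {s : Finset α}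
    (h : ∀ x, f x ∈ s ↔ x ∈ s) :
    f.IsCycleOn s ↔ (f.subtypePerm h : Perm s).IsCycleOn .univ :=
  ⟨fun hf => ⟨(f.subtypePerm h).bijective.bijOn_univ, fun x _ y _ =>
      sameCycle_subtypePerm.mpr (hf.2 x.2 y.2)⟩,
    fun hf => ⟨f.bijOn h, fun x hx y hy =>
      sameCycle_subtypePerm.mp (hf.2 (x := ⟨x, hx⟩) (y := ⟨y, hy⟩) trivial trivial)⟩⟩

theorem Equiv.Perm.IsCycleOn.card_dvd_orderOf {f : Perm α} {s : Finset α} (hf : f.IsCycleOn s)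
    (hs : s.Nonempty) : #s ∣ orderOf f := by
  obtain ⟨a, ha⟩ := hs
  exact (hf.pow_apply_eq ha).mp (by rw [pow_orderOf_eq_one, one_apply])

variable [Fintype α]

theorem Equiv.Perm.IsCycleOn.orderOf_dvd_card {c : Perm α} (hc : c.IsCycleOn .univ) :
    orderOf c ∣ Fintype.card α := by
  rw [← coe_univ] at hc
  refine orderOf_dvd_of_pow_eq_one (Equiv.ext fun x => ?_)
  simpa using hc.pow_card_apply (mem_univ x)

variable [DecidableEq α]

theorem Equiv.Perm.filter_sameCycle_eq_iff (f : Perm α) {a : α} {s : Finset α} (ha : a ∈ s) :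
    ({x | f.SameCycle a x} : Finset α) = s ↔ f.IsCycleOn s := by
  constructor
  · rintro rfl
    refine ⟨f.bijOn fun x => ?_, fun x hx y hy => ?_⟩
    · simp [sameCycle_apply_right]
    · exact (mem_filter.mp hx).2.symm.trans (mem_filter.mp hy).2
  · intro hf
    ext x
    simp only [mem_filter, mem_univ, true_and]
    refine ⟨?_, fun hx => hf.2 ha hx⟩
    rintro ⟨i, rfl⟩
    have h : ∀ x, f x ∈ s ↔ x ∈ s := fun _ => hf.apply_mem_iff
    simpa using ((f.subtypePerm h ^ i) ⟨a, ha⟩).2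

theorem Equiv.Perm.card_eq_sum_card_isCycleOn (P : Perm α → Prop) (a : α) :
    Nat.card {π : Perm α // P π} =
      ∑ s : Finset α with a ∈ s, Nat.card {π : Perm α // π.IsCycleOn s ∧ P π} := by
  classical
  rw [Nat.card_eq_fintype_card, Fintype.card_subtype,
    card_eq_sum_card_fiberwise (f := fun π => ({x | π.SameCycle a x} : Finset α))
      (t := {s | a ∈ s}) (fun π _ => by simp [SameCycle.refl])]
  refine sum_congr rfl fun s hs => ?_
  rw [filter_filter, ← Fintype.card_subtype, ← Nat.card_eq_fintype_card]
  exact Nat.card_congr <| Equiv.subtypeEquivRight fun π => by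
    rw [filter_sameCycle_eq_iff π (mem_filter.mp hs).2, and_comm]

theorem Equiv.Perm.isCycleOn_univ_iff_cycleType_eq (hα : 2 ≤ Fintype.card α) (c : Perm α) :
    c.IsCycleOn .univ ↔ c.cycleType = {Fintype.card α} := by
  have huniv : (.univ : Set α).Nontrivial := by
    rw [_root_.Set.nontrivial_univ_iff, ← Fintype.one_lt_card_iff_nontrivial]; omega
  constructor
  · intro hc
    have hsupp : c.support = univ :=
      eq_univ_of_forall fun x => mem_support.mpr (hc.apply_ne huniv trivial)
    rw [(isCycle_iff_exists_isCycleOn.mpr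
      ⟨_, huniv, hc, fun _ _ => trivial⟩).cycleType, hsupp, Finset.card_univ]
  · intro hc
    have hcyc : c.IsCycle := card_cycleType_eq_one.mp (by simp [hc])
    have hsupp : c.support = univ := eq_univ_of_card _ (by rw [← sum_cycleType, hc]; simp)
    convert hcyc.isCycleOn
    ext x
    simp [← mem_support, hsupp]

theorem Equiv.Perm.card_isCycleOn_univ [Nonempty α] :
    Nat.card {c : Perm α // c.IsCycleOn .univ} = (Fintype.card α - 1)! := by
  rcases Nat.lt_or_ge 1 (Fintype.card α) with hα | hα
  · rw [Nat.card_congr (Equiv.subtypeEquivRight (isCycleOn_univ_iff_cycleType_eq hα)),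
      Nat.card_eq_fintype_card, Fintype.card_subtype, card_of_cycleType_singleton hα le_rfl,
      Nat.choose_self, mul_one]
  · have : Subsingleton α := Fintype.card_le_one_iff_subsingleton.mp hα
    have : Unique {c : Perm α // c.IsCycleOn .univ} :=
      { default := ⟨1, isCycleOn_of_subsingleton _ _⟩, uniq := fun _ => Subsingleton.elim _ _ }
    rw [Nat.card_unique, Nat.sub_eq_zero_of_le hα, factorial_zero]

end IsCycleOn

noncomputable def coprimeOrderCount (β : Type*) (m : ℕ) : ℕ :=
  Nat.card {σ : Perm β // (orderOf σ).Coprime m}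

theorem coprimeOrderCount_congr {β γ : Type*} (e : β ≃ γ) (m : ℕ) :
    coprimeOrderCount β m = coprimeOrderCount γ m :=
  Nat.card_congr <| e.permCongrHom.toEquiv.subtypeEquiv fun σ => by
    rw [MulEquiv.toEquiv_eq_coe, MulEquiv.coe_toEquiv, MulEquiv.orderOf_eq]

theorem rho_eq_coprimeOrderCount_div (n m : ℕ) :
    rho n m = coprimeOrderCount (Fin n) m / (n ! : ℝ) := by
  rw [rho, coprimeOrderCount, Nat.card_eq_fintype_card, Fintype.card_subtype]

theorem card_isCycleOn_coprime {α : Type*} [DecidableEq α] {m : ℕ} (s : Finset α)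
    (hs : s.Nonempty) (hsm : (#s).Coprime m) :
    Nat.card {π : Perm α // π.IsCycleOn s ∧ (orderOf π).Coprime m} =
      (#s - 1)! * coprimeOrderCount {x // x ∉ s} m := by
  have : Nonempty s := hs.to_subtype
  let e : {π : Perm α // π.IsCycleOn s ∧ (orderOf π).Coprime m} ≃
      {c : Perm s // c.IsCycleOn .univ} × {σ : Perm {x // x ∉ s} // (orderOf σ).Coprime m} :=
    { toFun π :=
        have h : ∀ x, π.1 x ∈ s ↔ x ∈ s := fun _ => π.2.1.apply_mem_iff
        (⟨π.1.subtypePerm h, (π.1.isCycleOn_iff_subtypePerm h).mp π.2.1⟩,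
          ⟨π.1.subtypePerm fun x => not_congr (h x),
            π.2.2.coprime_dvd_left (Perm.orderOf_subtypePerm_dvd π.1 _)⟩)
      invFun p := ⟨p.1.1.subtypeCongr p.2.1,
        (Perm.isCycleOn_iff_subtypePerm _ (Perm.subtypeCongr_apply_iff _ _)).mpr
          (by rw [Perm.subtypePerm_subtypeCongr_left]; exact p.1.2),
        by
          rw [Perm.orderOf_subtypeCongr]
          refine Nat.Coprime.lcm_left (hsm.coprime_dvd_left ?_) p.2.2
          simpa using p.1.2.orderOf_dvd_card⟩
      left_inv π := Subtype.ext (Perm.subtypeCongr_subtypePerm _ fun _ => π.2.1.apply_mem_iff)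
      right_inv p := Prod.ext (Subtype.ext (Perm.subtypePerm_subtypeCongr_left _ _))
        (Subtype.ext (Perm.subtypePerm_subtypeCongr_right _ _)) }
  rw [Nat.card_congr e, Nat.card_prod, Perm.card_isCycleOn_univ, Fintype.card_coe,
    coprimeOrderCount]

variable {α : Type*} [Fintype α] [DecidableEq α]

theorem card_isCycleOn_coprime_eq_ite (m : ℕ) (s : Finset α) (hs : s.Nonempty) :
    Nat.card {π : Perm α // π.IsCycleOn s ∧ (orderOf π).Coprime m} =
      if (#s).Coprime m then (#s - 1)! * coprimeOrderCount (Fin (Fintype.card α - #s)) m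
      else 0 := by
  split_ifs with hsm
  · rw [card_isCycleOn_coprime s hs hsm, coprimeOrderCount_congr
      (Fintype.equivFinOfCardEq (by rw [Fintype.card_subtype_compl, Fintype.card_coe]))]
  · have : IsEmpty {π : Perm α // π.IsCycleOn s ∧ (orderOf π).Coprime m} :=
      ⟨fun ⟨_, hπ, hπm⟩ => hsm (hπm.coprime_dvd_left (hπ.card_dvd_orderOf hs))⟩
    exact Nat.card_of_isEmpty

theorem coprimeOrderCount_eq_sum_descFactorial (m : ℕ) (a : α) :
    coprimeOrderCount α m =
      ∑ k ∈ Icc 1 (Fintype.card α) with k.Coprime m,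
        (Fintype.card α - 1).descFactorial (k - 1) *
          coprimeOrderCount (Fin (Fintype.card α - k)) m := by
  rw [coprimeOrderCount, Perm.card_eq_sum_card_isCycleOn _ a,
    sum_congr rfl fun s hs => card_isCycleOn_coprime_eq_ite m s ⟨a, (mem_filter.mp hs).2⟩,
    sum_filter_mem_eq_sum_choose a fun k => if k.Coprime m then
      (k - 1)! * coprimeOrderCount (Fin (Fintype.card α - k)) m else 0, sum_filter]
  refine sum_congr rfl fun k _ => ?_
  split_ifs <;> simp [descFactorial_eq_factorial_mul_choose, mul_comm, mul_left_comm]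

theorem stmt_4_general (m : ℕ) :
    ∀ n : ℕ, 1 ≤ n →
      (n : ℝ) * rho n m =
        ∑ k ∈ (Finset.Icc 1 n).filter (fun k => Nat.Coprime k m), rho (n - k) m := by
  intro n hn
  have hcount := coprimeOrderCount_eq_sum_descFactorial m (⟨0, hn⟩ : Fin n)
  rw [Fintype.card_fin] at hcount
  have hfact : (n ! : ℝ) = n * (n - 1)! := by exact_mod_cast (mul_factorial_pred (by omega)).symm
  simp only [rho_eq_coprimeOrderCount_div, hcount, hfact, Nat.cast_sum, Nat.cast_mul, sum_div,
    mul_sum]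
  refine sum_congr rfl fun k hk => ?_
  obtain ⟨hk1, hkn⟩ := mem_Icc.mp (mem_filter.mp hk).1
  have hdesc : ((n - k)! : ℝ) * (n - 1).descFactorial (k - 1) = (n - 1)! := by
    have := factorial_mul_descFactorial (show k - 1 ≤ n - 1 by omega)
    rw [show n - 1 - (k - 1) = n - k by omega] at this
    exact_mod_cast this
  have hn0 : (n : ℝ) ≠ 0 := by positivity
  field_simp
  rw [← hdesc]
  ring

theorem stmt_4 (m : ℕ) (hm : 0 < m) :
    ∀ n : ℕ, 1 ≤ n →
      (n : ℝ) * rho n m =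
        ∑ k ∈ (Finset.Icc 1 n).filter (fun k => Nat.Coprime k m), rho (n - k) m :=
  stmt_4_general m
end

section
/- Let y and a be real numbers with −1 < y < 0 and a ≥ 2. Then 0 < 1 − ((y+1)/a)·(1 − y/a) ≤ ((a−1)/a)^(y+1) < 1 − (y+1)/a. -/
/-!
Put `t = y + 1 ∈ (0, 1)` and `s = 1 / a ∈ (0, 1/2]`, so that `(a - 1) / a = 1 - s` and the left-hand
side is `1 - t s - t (1 - t) s²`. The upper bound is the strict Bernoulli inequality for the
concave power `x ↦ x ^ t`. For the lower bound, `F x = (1 - x) ^ t + t x + t (1 - t) x²` is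
monotone on `[0, 1/2]` with `F 0 = 1`: its derivative is `t (1 + 2 (1 - t) x - (1 - x) ^ (t - 1))`,
and writing `(1 - x) ^ (t - 1) = (1 + x / (1 - x)) ^ (1 - t)`, Bernoulli together with
`x / (1 - x) ≤ 2 x` shows it is nonnegative.
-/

open Real Set

theorem one_sub_rpow_neg_le_one_add_two_mul {u x : ℝ} (hu0 : 0 ≤ u) (hu1 : u ≤ 1)
    (hx0 : 0 ≤ x) (hx : x ≤ 1 / 2) :
    (1 - x) ^ (-u) ≤ 1 + 2 * u * x := by
  have hx1 : 0 < 1 - x := by linarith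
  have hratio : x / (1 - x) ≤ 2 * x := by
    rw [div_le_iff₀ hx1]
    nlinarith
  calc (1 - x) ^ (-u) = (1 + x / (1 - x)) ^ u := by
        rw [rpow_neg hx1.le, ← inv_rpow hx1.le]
        congr 1
        field_simp
        ring
    _ ≤ 1 + u * (x / (1 - x)) :=
        rpow_one_add_le_one_add_mul_self (by linarith [div_nonneg hx0 hx1.le]) hu0 hu1
    _ ≤ 1 + 2 * u * x := by nlinarith

theorem one_sub_mul_sub_mul_sq_le_one_sub_rpow {t s : ℝ} (ht0 : 0 ≤ t) (ht1 : t ≤ 1)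
    (hs0 : 0 ≤ s) (hs : s ≤ 1 / 2) :
    1 - t * s - t * (1 - t) * s ^ 2 ≤ (1 - s) ^ t := by
  set F : ℝ → ℝ := fun x ↦ (1 - x) ^ t + t * x + t * (1 - t) * x ^ 2
  have hF : ∀ x < 1, HasDerivAt F (t * (1 + 2 * (1 - t) * x - (1 - x) ^ (-(1 - t)))) x := by
    intro x hx
    have hpow : HasDerivAt (fun x : ℝ ↦ (1 - x) ^ t) (-1 * t * (1 - x) ^ (t - 1)) x :=
      ((hasDerivAt_id' x).const_sub 1).rpow_const (Or.inl (by linarith))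
    refine ((hpow.add ((hasDerivAt_id x).const_mul t)).add
      ((hasDerivAt_pow 2 x).const_mul (t * (1 - t)))).congr_deriv ?_
    rw [neg_sub]
    ring
  have hmono : MonotoneOn F (Icc 0 (1 / 2)) := by
    refine monotoneOn_of_hasDerivWithinAt_nonneg (convex_Icc _ _)
      (fun x hx ↦ (hF x (by linarith [hx.2])).continuousAt.continuousWithinAt)
      (fun x hx ↦ (hF x ?_).hasDerivWithinAt) (fun x hx ↦ ?_)
    all_goals rw [interior_Icc] at hx
    · linarith [hx.2]
    · exact mul_nonneg ht0 (sub_nonneg.2 (one_sub_rpow_neg_le_one_add_two_mul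
        (by linarith) (by linarith) hx.1.le hx.2.le))
  have hF0 : F 0 = 1 := by simp [F]
  have hFs := hmono ⟨le_rfl, by norm_num⟩ ⟨hs0, hs⟩ hs0
  rw [hF0] at hFs
  linarith

theorem stmt_6 (y a : ℝ) (hy1 : -1 < y) (hy2 : y < 0) (ha : 2 ≤ a) :
    0 < 1 - (y + 1) / a * (1 - y / a) ∧
    1 - (y + 1) / a * (1 - y / a) ≤ ((a - 1) / a) ^ (y + 1) ∧
    ((a - 1) / a) ^ (y + 1) < 1 - (y + 1) / a := by
  have ha0 : 0 < a := by linarith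
  have hs0 : 0 < 1 / a := one_div_pos.2 ha0
  have hs : 1 / a ≤ 1 / 2 := one_div_le_one_div_of_le two_pos ha
  have hbase : (a - 1) / a = 1 - 1 / a := by field_simp
  have hlower : 1 - (y + 1) / a * (1 - y / a)
      = 1 - (y + 1) * (1 / a) - (y + 1) * (1 - (y + 1)) * (1 / a) ^ 2 := by
    field_simp
    ring
  refine ⟨?_, ?_, ?_⟩
  · rw [hlower]
    nlinarith [mul_pos (by linarith : 0 < y + 1) hs0]
  · rw [hlower, hbase]
    exact one_sub_mul_sub_mul_sq_le_one_sub_rpow (by linarith) (by linarith) hs0.le hs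
  · calc ((a - 1) / a) ^ (y + 1) = (1 + -(1 / a)) ^ (y + 1) := by rw [hbase, sub_eq_add_neg]
      _ < 1 + (y + 1) * -(1 / a) := rpow_one_add_lt_one_add_mul_self (by linarith)
          (neg_ne_zero.2 hs0.ne') (by linarith) (by linarith)
      _ = 1 - (y + 1) / a := by ring
end

section
/- Let p be a prime and let f(n,p) = ρ(n,p)·(n/p)^(1 − φ(p)/p) = ρ(n,p)·(n/p)^(1/p). For every integer b with ⌊(p−1)/2⌋ < b ≤ p−1, the sequence a ↦ f(ap + b, p) is strictly decreasing for real a ≥ (p−1)/2, i.e. f((a+1)p + b, p) < f(ap + b, p) for all integers a with a ≥ (p−1)/2. -/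
/-- `f n p = ρ(n,p) · (n/p)^(1 − φ(p)/p)`. -/
noncomputable def f (n p : ℕ) : ℝ :=
  rho n p * ((n : ℝ) / p) ^ ((1 : ℝ) - (Nat.totient p : ℝ) / p)

/-!
Fix a point `x` of an `(m+1)`-element set and sort permutations by the cycle through `x`. There
are `m (m-1) ⋯ (m-k+1)` cycles of length `k+1` through `x`, and a permutation with such a cycle
has order prime to `p` iff `p ∤ k+1` and its restriction to the remaining `m-k` points has order
prime to `p`. The resulting recursion for the number `c(n)` of permutations of order prime to `p`
is solved by `c(n) = n! ∏_{i ≤ ⌊n/p⌋} (1 - 1/(ip))`: after dividing by `(n-1)!` its summands are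
constant on blocks of `p` consecutive indices, and `p - 1` of the `p` summands of each block survive.

Hence `ρ(ap+b, p) = ∏_{i ≤ a} (1 - 1/(ip))` for `b < p`, and with `A = a+1`, `s = b/p` the claim
becomes `(1 - 1/(Ap))^p (A + s) < A - 1 + s`. This follows from the second-order bound
`(1-t)^p ≤ 1 - pt + p(p-1)t²/2` as soon as `2s ≥ 1` and `2A ≥ p + 1`.
-/

open Finset Equiv Equiv.Perm

namespace CoprimeOrderPerm

noncomputable def coprimeOrderPerms (p : ℕ) (α : Type*) [Fintype α] [DecidableEq α] :
    Finset (Perm α) :=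
  {π | (orderOf π).Coprime p}

section Permutations

variable {α : Type*} [DecidableEq α] {l : List α} {x : α}

lemma exists_formPerm_pow_apply_eq (hl : l.Nodup) (hx : l.head? = some x) {y : α} (hy : y ∈ l) :
    ∃ i : ℕ, (l.formPerm ^ i) x = y := by
  obtain ⟨i, hi, rfl⟩ := List.getElem_of_mem hy
  have h0 : 0 < l.length := List.length_pos_of_mem hy
  have hx0 : l[0] = x := by simpa [List.head?_eq_getElem?, List.getElem?_eq_getElem h0] using hx
  refine ⟨i, ?_⟩
  rw [← hx0, List.formPerm_pow_apply_getElem _ hl]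
  simp [Nat.mod_eq_of_lt hi]

lemma disjoint_formPerm_ofSubtype (σ : Perm {y // y ∉ l}) : l.formPerm.Disjoint (ofSubtype σ) :=
  fun y => by
    by_cases hy : y ∈ l
    · exact Or.inr (ofSubtype_apply_of_not_mem σ (not_not.mpr hy))
    · exact Or.inl (List.formPerm_apply_of_notMem hy)

variable [Fintype α]

lemma card_coprimeOrderPerms_congr (p : ℕ) {β : Type*} [Fintype β] [DecidableEq β] (e : α ≃ β) :
    #(coprimeOrderPerms p α) = #(coprimeOrderPerms p β) := by
  refine card_equiv e.permCongrHom.toEquiv fun π => ?_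
  simp only [coprimeOrderPerms, mem_filter, mem_univ, true_and]
  show _ ↔ (orderOf (e.permCongrHom π)).Coprime p
  rw [MulEquiv.orderOf_eq]

/-- The cycle of `π` through `x`, listed from `x` on. Unlike `Perm.toList`, which is `[]` at a
fixed point, this is `[x]` there, so that every `π` has a cycle list of length `≥ 1`. -/
def cycleList (π : Perm α) (x : α) : List α := if π x = x then [x] else π.toList x

lemma formPerm_cycleList (π : Perm α) (x : α) : (cycleList π x).formPerm = π.cycleOf x := by
  unfold cycleList
  split_ifs with h
  · rw [List.formPerm_singleton, (cycleOf_eq_one_iff π).mpr h]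
  · exact formPerm_toList π x

lemma cycleOf_cycleOf (π : Perm α) (x : α) : (π.cycleOf x).cycleOf x = π.cycleOf x := by
  by_cases h : π x = x
  · simp [(cycleOf_eq_one_iff π).mpr h]
  · exact (isCycle_cycleOf π h).cycleOf_eq (by rwa [cycleOf_apply_self])

lemma toList_cycleOf (π : Perm α) (x : α) : (π.cycleOf x).toList x = π.toList x := by
  refine List.ext_getElem (by simp [cycleOf_cycleOf]) fun k _ _ => ?_
  simp only [getElem_toList, cycleOf_pow_apply_self]

lemma cycleList_cycleOf (π : Perm α) (x : α) : cycleList (π.cycleOf x) x = cycleList π x := by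
  simp only [cycleList, cycleOf_apply_self, toList_cycleOf]

lemma nodup_cycleList (π : Perm α) (x : α) : (cycleList π x).Nodup := by
  unfold cycleList
  split_ifs
  · exact List.nodup_singleton x
  · exact nodup_toList π x

lemma head?_cycleList (π : Perm α) (x : α) : (cycleList π x).head? = some x := by
  unfold cycleList
  split_ifs with h
  · rfl
  · have hx := mem_support.mpr h
    rw [List.head?_eq_getElem?, List.getElem?_eq_getElem (length_toList_pos_of_mem_support _ _ hx),
      toList_getElem_zero _ _ hx]

lemma cycleList_formPerm (hl : l.Nodup) (hx : l.head? = some x) : cycleList l.formPerm x = l := by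
  obtain ⟨t, rfl⟩ := List.head?_eq_some_iff.mp hx
  cases t with
  | nil => simp [cycleList]
  | cons y t =>
    have hlen : 2 ≤ (x :: y :: t).length := by simp
    have hmoved := (List.formPerm_apply_mem_ne_self_iff _ hl x List.mem_cons_self).mpr hlen
    rw [cycleList, if_neg hmoved]
    exact toList_formPerm_nontrivial _ hlen hl

lemma cycleList_eq_iff (hl : l.Nodup) (hx : l.head? = some x) (π : Perm α) :
    cycleList π x = l ↔ π.cycleOf x = l.formPerm := by
  constructor
  · rintro rfl
    exact (formPerm_cycleList π x).symm
  · intro h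
    rw [← cycleList_cycleOf, h, cycleList_formPerm hl hx]

lemma mem_image_cycleList :
    l ∈ univ.image (cycleList · x) ↔ l.Nodup ∧ l.head? = some x := by
  constructor
  · simp only [mem_image, mem_univ, true_and]
    rintro ⟨π, rfl⟩
    exact ⟨nodup_cycleList π x, head?_cycleList π x⟩
  · rintro ⟨hl, hx⟩
    exact mem_image.mpr ⟨l.formPerm, mem_univ _, cycleList_formPerm hl hx⟩

lemma cycleOf_eq_formPerm_iff (hl : l.Nodup) (hx : l.head? = some x) (π : Perm α) :
    π.cycleOf x = l.formPerm ↔ ∃ σ : Perm {y // y ∉ l}, l.formPerm * ofSubtype σ = π := by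
  constructor
  · intro h
    suffices hτ : l.formPerm⁻¹ * π ∈ (ofSubtype : Perm {y // y ∉ l} →* Perm α).range by
      obtain ⟨σ, hσ⟩ := hτ
      exact ⟨σ, by rw [hσ, mul_inv_cancel_left]⟩
    rw [mem_range_ofSubtype_iff]
    intro y hy
    contrapose! hy
    replace hy : y ∈ l := by simpa using hy
    obtain ⟨i, rfl⟩ := exists_formPerm_pow_apply_eq hl hx hy
    rw [← h, cycleOf_pow_apply_self, Finset.mem_coe, mem_support, not_not, Perm.mul_apply,
      inv_eq_iff_eq, cycleOf_apply_apply_pow_self, pow_succ', Perm.mul_apply]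
  · rintro ⟨σ, rfl⟩
    have hσx : ofSubtype σ x = x :=
      ofSubtype_apply_of_not_mem σ (not_not.mpr (List.mem_of_mem_head? hx))
    rw [cycleOf_mul_of_apply_right_eq_self (disjoint_formPerm_ofSubtype σ).commute x hσx,
      ← formPerm_cycleList, cycleList_formPerm hl hx]

lemma orderOf_formPerm (hl : l.Nodup) (hx : l.head? = some x) : orderOf l.formPerm = l.length := by
  rcases Nat.lt_or_ge l.length 2 with hlen | hlen
  · obtain ⟨t, rfl⟩ := List.head?_eq_some_iff.mp hx
    cases t with
    | nil => simp
    | cons => simp at hlen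
  · rw [(List.isCycle_formPerm hl hlen).orderOf, List.support_formPerm_of_nodup l hl
      (fun y h => by simp [h] at hlen), List.toFinset_card_of_nodup hl]

lemma coprime_orderOf_formPerm_mul_ofSubtype {p : ℕ} (hp : p.Prime) (hl : l.Nodup)
    (hx : l.head? = some x) (σ : Perm {y // y ∉ l}) :
    (orderOf (l.formPerm * ofSubtype σ)).Coprime p ↔ ¬ p ∣ l.length ∧ (orderOf σ).Coprime p := by
  rw [(disjoint_formPerm_ofSubtype σ).orderOf, orderOf_formPerm hl hx,
    orderOf_injective ofSubtype ofSubtype_injective σ, Nat.coprime_comm, hp.coprime_iff_not_dvd,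
    hp.dvd_lcm, not_or, Nat.coprime_comm, hp.coprime_iff_not_dvd]

lemma card_coprimeOrderPerms_filter_cycleList {p : ℕ} (hp : p.Prime) (hl : l.Nodup)
    (hx : l.head? = some x) :
    #{π ∈ coprimeOrderPerms p α | cycleList π x = l} =
      if p ∣ l.length then 0 else #(coprimeOrderPerms p (Fin (Fintype.card α - l.length))) := by
  have hfiber : {π ∈ coprimeOrderPerms p α | cycleList π x = l} =
      {σ ∈ coprimeOrderPerms p {y // y ∉ l} | ¬ p ∣ l.length}.map
        ⟨fun σ => l.formPerm * ofSubtype σ,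
          fun _ _ h => ofSubtype_injective (mul_left_cancel h)⟩ := by
    ext π
    simp only [coprimeOrderPerms, mem_filter, mem_univ, true_and, mem_map,
      cycleList_eq_iff hl hx, cycleOf_eq_formPerm_iff hl hx]
    constructor
    · rintro ⟨hπ, σ, rfl⟩
      exact ⟨σ, (coprime_orderOf_formPerm_mul_ofSubtype hp hl hx σ).mp hπ |>.symm, rfl⟩
    · rintro ⟨σ, hσ, rfl⟩
      exact ⟨(coprime_orderOf_formPerm_mul_ofSubtype hp hl hx σ).mpr hσ.symm, σ, rfl⟩
  rw [hfiber, card_map]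
  split_ifs with hdvd
  · simp [hdvd]
  · rw [filter_true_of_mem fun _ _ => hdvd]
    refine card_coprimeOrderPerms_congr p (Fintype.equivFinOfCardEq ?_)
    rw [Fintype.card_subtype_compl, Fintype.card_of_subtype l.toFinset (fun _ => List.mem_toFinset),
      List.toFinset_card_of_nodup hl]

lemma card_cycleList_image_filter_length {m : ℕ} (hcard : Fintype.card α = m + 1) (x : α) (k : ℕ) :
    #{l ∈ univ.image (cycleList · x) | l.length = k + 1} = m.descFactorial k := by
  have hcompl : Fintype.card {y // y ≠ x} = m := by
    rw [Fintype.card_subtype_compl, hcard, Fintype.card_subtype_eq]; rfl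
  rw [← hcompl, ← Fintype.card_fin k, ← Fintype.card_embedding_eq, Fintype.card_fin, ← card_univ]
  symm
  refine card_bij (fun e _ => x :: List.ofFn (fun i => (e i : α))) ?_ ?_ ?_
  · intro e _
    simp only [mem_filter, mem_image_cycleList, List.nodup_cons, List.mem_ofFn, List.head?_cons,
      List.length_cons, List.length_ofFn, and_true]
    exact ⟨fun ⟨i, hi⟩ => (e i).2 hi, List.nodup_ofFn.mpr fun i j h => e.injective (Subtype.ext h)⟩
  · intro e _ e' _ h
    simp only [List.cons.injEq, true_and] at h
    exact DFunLike.ext _ _ fun i => Subtype.ext (congrFun (List.ofFn_injective h) i)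
  · intro l hl
    simp only [mem_filter, mem_image_cycleList, List.head?_eq_some_iff] at hl
    obtain ⟨⟨hnodup, t, rfl⟩, hlen⟩ := hl
    simp only [List.length_cons, Nat.add_right_cancel_iff] at hlen
    subst hlen
    rw [List.nodup_cons] at hnodup
    refine ⟨⟨fun i => ⟨t[i], fun h => hnodup.1 (h ▸ List.getElem_mem _)⟩,
      fun i j h => Fin.ext (hnodup.2.getElem_inj_iff.mp (congrArg Subtype.val h))⟩,
      mem_univ _, ?_⟩
    simp [List.ofFn_getElem]

lemma card_coprimeOrderPerms_eq_sum {p : ℕ} (hp : p.Prime) {m : ℕ}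
    (hcard : Fintype.card α = m + 1) :
    #(coprimeOrderPerms p α) = ∑ k ∈ range (m + 1),
      if p ∣ k + 1 then 0 else m.descFactorial k * #(coprimeOrderPerms p (Fin (m - k))) := by
  obtain ⟨x⟩ : Nonempty α := Fintype.card_pos_iff.mp (by omega)
  set t := univ.image (cycleList · x)
  have hlength : ∀ l ∈ t, 1 ≤ l.length ∧ l.length ≤ m + 1 := by
    intro l hl
    obtain ⟨hnodup, hx⟩ := mem_image_cycleList.mp hl
    exact ⟨List.length_pos_iff.mpr (List.ne_nil_of_mem (List.mem_of_mem_head? hx)),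
      hcard ▸ hnodup.length_le_card⟩
  rw [card_eq_sum_card_fiberwise (t := t) fun π _ => mem_image_of_mem _ (mem_univ π),
    ← sum_fiberwise_of_maps_to (g := fun l => l.length - 1) (t := range (m + 1))
      fun l hl => mem_range.mpr (by have := hlength l hl; omega)]
  refine sum_congr rfl fun k _ => ?_
  have hfiber : ∀ l ∈ {l ∈ t | l.length - 1 = k}, #{π ∈ coprimeOrderPerms p α | cycleList π x = l} =
      if p ∣ k + 1 then 0 else #(coprimeOrderPerms p (Fin (m - k))) := by
    intro l hl
    obtain ⟨hlt, hlen⟩ := mem_filter.mp hl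
    obtain ⟨hnodup, hx⟩ := mem_image_cycleList.mp hlt
    have hlk : l.length = k + 1 := by have := hlength l hlt; omega
    rw [card_coprimeOrderPerms_filter_cycleList hp hnodup hx, hlk, hcard, Nat.add_sub_add_right]
  have hcount : #{l ∈ t | l.length - 1 = k} = m.descFactorial k := by
    rw [← card_cycleList_image_filter_length hcard x k]
    congr 1
    refine filter_congr fun l hl => ?_
    have := hlength l hl
    omega
  rw [sum_congr rfl hfiber, sum_const, hcount, smul_eq_mul]
  split_ifs <;> simp

end Permutations

lemma card_coprimeOrderPerms_zero (p : ℕ) : #(coprimeOrderPerms p (Fin 0)) = 1 := by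
  rw [coprimeOrderPerms, filter_true_of_mem fun π _ => by simp [Subsingleton.elim π 1]]
  rfl

noncomputable def rhoProd (p q : ℕ) : ℝ := ∏ i ∈ range q, (1 - 1 / ((i + 1 : ℝ) * p))

lemma rhoProd_zero (p : ℕ) : rhoProd p 0 = 1 := prod_range_zero _

lemma rhoProd_succ (p q : ℕ) : rhoProd p (q + 1) = rhoProd p q * (1 - 1 / ((q + 1 : ℝ) * p)) :=
  prod_range_succ _ _

lemma one_sub_one_div_mul_pos {p : ℕ} (hp : 2 ≤ p) (i : ℕ) : 0 < 1 - 1 / ((i + 1 : ℝ) * p) := by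
  have : (2 : ℝ) ≤ (i + 1) * p := by
    have : (2 : ℝ) ≤ p := by exact_mod_cast hp
    nlinarith [(i.cast_nonneg : (0 : ℝ) ≤ i)]
  rw [sub_pos, div_lt_one (by linarith)]
  linarith

lemma rhoProd_pos {p : ℕ} (hp : 2 ≤ p) (q : ℕ) : 0 < rhoProd p q :=
  prod_pos fun i _ => one_sub_one_div_mul_pos hp i

lemma mul_add_div_of_lt {p q r : ℕ} (hr : r < p) : (q * p + r) / p = q :=
  Nat.div_eq_of_lt_le (by omega) (by rw [Nat.succ_mul]; omega)

lemma sum_range_rhoProd_div {p b : ℕ} (hb : b < p) (q : ℕ) :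
    ∑ i ∈ range (p - 1), rhoProd p ((q * p + b + (i + 1)) / p) =
      (p - 1 - b) * rhoProd p q + b * rhoProd p (q + 1) := by
  rw [show p - 1 = (p - 1 - b) + b by omega, sum_range_add]
  have hlow : ∀ i ∈ range (p - 1 - b), rhoProd p ((q * p + b + (i + 1)) / p) = rhoProd p q := by
    intro i hi
    rw [mem_range] at hi
    rw [add_assoc, mul_add_div_of_lt (by omega)]
  have hhigh : ∀ i ∈ range b,
      rhoProd p ((q * p + b + (p - 1 - b + i + 1)) / p) = rhoProd p (q + 1) := by
    intro i hi
    rw [mem_range] at hi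
    rw [show q * p + b + (p - 1 - b + i + 1) = (q + 1) * p + i by rw [Nat.succ_mul]; omega,
      mul_add_div_of_lt (by omega)]
  rw [sum_congr rfl hlow, sum_congr rfl hhigh]
  simp [Nat.cast_sub (by omega : b ≤ p - 1), Nat.cast_sub (by omega : 1 ≤ p)]

lemma sum_range_ite_rhoProd {p : ℕ} (hp : 0 < p) (n : ℕ) :
    ∑ j ∈ range n, (if p ∣ n - j then 0 else rhoProd p (j / p)) = n * rhoProd p (n / p) := by
  obtain ⟨q, b, hb, rfl⟩ : ∃ q b, b < p ∧ n = q * p + b :=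
    ⟨n / p, n % p, Nat.mod_lt n hp, by rw [Nat.mul_comm, Nat.div_add_mod]⟩
  rw [mul_add_div_of_lt hb]
  induction q with
  | zero =>
    simp only [zero_mul, zero_add]
    have hterm : ∀ j ∈ range b, (if p ∣ b - j then 0 else rhoProd p (j / p)) = 1 := by
      intro j hj
      rw [mem_range] at hj
      rw [if_neg (Nat.not_dvd_of_pos_of_lt (by omega) (by omega)), Nat.div_eq_of_lt (by omega),
        rhoProd_zero]
    rw [sum_congr rfl hterm]
    simp [rhoProd_zero]
  | succ q ih =>
    have hn : (q + 1) * p + b = q * p + b + p := by rw [Nat.succ_mul]; omega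
    have hold : ∀ j ∈ range (q * p + b), (if p ∣ q * p + b + p - j then 0 else rhoProd p (j / p)) =
        if p ∣ q * p + b - j then 0 else rhoProd p (j / p) := by
      intro j hj
      rw [mem_range] at hj
      simp only [show q * p + b + p - j = q * p + b - j + p by omega, Nat.dvd_add_self_right]
    have hnew : ∀ i ∈ range (p - 1), (if p ∣ q * p + b + p - (q * p + b + (i + 1)) then 0
        else rhoProd p ((q * p + b + (i + 1)) / p)) = rhoProd p ((q * p + b + (i + 1)) / p) := by
      intro i hi
      rw [mem_range] at hi
      rw [if_neg (Nat.not_dvd_of_pos_of_lt (by omega) (by omega))]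
    rw [hn, sum_range_add, sum_congr rfl hold, ih, ← Nat.sub_add_cancel hp, sum_range_succ',
      Nat.sub_add_cancel hp, sum_congr rfl hnew, sum_range_rhoProd_div hb, add_zero,
      if_pos (by simp), add_zero, rhoProd_succ]
    have hp' : (0 : ℝ) < p := by exact_mod_cast hp
    push_cast
    field_simp
    ring

lemma card_coprimeOrderPerms_fin {p : ℕ} (hp : p.Prime) (n : ℕ) :
    (#(coprimeOrderPerms p (Fin n)) : ℝ) = n.factorial * rhoProd p (n / p) := by
  induction n using Nat.strong_induction_on with
  | _ n ih =>
  rcases n with _ | m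
  · simp [card_coprimeOrderPerms_zero, rhoProd_zero]
  have hterm : ∀ k ∈ range (m + 1),
      ((if p ∣ k + 1 then 0 else m.descFactorial k * #(coprimeOrderPerms p (Fin (m - k))) : ℕ) :
        ℝ) = m.factorial *
          (if p ∣ m + 1 - (m + 1 - 1 - k) then 0 else rhoProd p ((m + 1 - 1 - k) / p)) := by
    intro k hk
    rw [mem_range] at hk
    rw [show m + 1 - (m + 1 - 1 - k) = k + 1 by omega, Nat.add_sub_cancel]
    split_ifs
    · simp
    · rw [Nat.cast_mul, ih (m - k) (by omega), ← mul_assoc, ← Nat.cast_mul,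
        mul_comm (m.descFactorial k), Nat.factorial_mul_descFactorial (by omega)]
  rw [card_coprimeOrderPerms_eq_sum hp (Fintype.card_fin _), Nat.cast_sum, sum_congr rfl hterm,
    ← mul_sum, sum_range_reflect (fun j => if p ∣ m + 1 - j then 0 else rhoProd p (j / p)),
    sum_range_ite_rhoProd hp.pos, Nat.factorial_succ]
  push_cast
  ring

lemma rho_eq_rhoProd {p : ℕ} (hp : p.Prime) (n : ℕ) : rho n p = rhoProd p (n / p) := by
  rw [rho, ← coprimeOrderPerms, card_coprimeOrderPerms_fin hp, mul_div_cancel_left₀]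
  exact_mod_cast n.factorial_ne_zero

lemma one_sub_pow_le (n : ℕ) {t : ℝ} (h0 : 0 ≤ t) (h1 : t ≤ 1) :
    (1 - t) ^ n ≤ 1 - n * t + n * (n - 1) / 2 * t ^ 2 := by
  induction n with
  | zero => simp
  | succ n ih =>
    have hn : (0 : ℝ) ≤ n * (n - 1) := by
      rcases n with _ | n
      · simp
      · push_cast; nlinarith
    calc (1 - t) ^ (n + 1) = (1 - t) ^ n * (1 - t) := pow_succ _ _
      _ ≤ (1 - n * t + n * (n - 1) / 2 * t ^ 2) * (1 - t) :=
        mul_le_mul_of_nonneg_right ih (by linarith)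
      _ ≤ 1 - (n + 1 : ℕ) * t + (n + 1 : ℕ) * ((n + 1 : ℕ) - 1) / 2 * t ^ 2 := by
        push_cast
        nlinarith [mul_nonneg hn (pow_nonneg h0 3)]

lemma one_sub_pow_mul_lt {p : ℕ} (hp : 1 ≤ p) {A s : ℝ} (hs : 1 / 2 ≤ s) (hA : p + 1 ≤ 2 * A) :
    (1 - 1 / (A * p)) ^ p * (A + s) < A - 1 + s := by
  have hp' : (1 : ℝ) ≤ p := by exact_mod_cast hp
  have hA1 : 1 ≤ A := by linarith
  have hAp : 1 ≤ A * p := by nlinarith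
  have hquad := one_sub_pow_le p (t := 1 / (A * p)) (by positivity)
    (by rw [div_le_one (by linarith)]; exact hAp)
  have hpos : 0 < 2 * p * A * s - (p - 1) * (A + s) := by
    have h1 : (0 : ℝ) ≤ 2 * A - p - 1 := by linarith
    have h2 : (0 : ℝ) ≤ 2 * s - 1 := by linarith
    nlinarith [mul_nonneg h1 (by nlinarith : (0 : ℝ) ≤ p * (2 * s - 1) + 1),
      mul_nonneg (sq_nonneg (p : ℝ)) h2]
  calc (1 - 1 / (A * p)) ^ p * (A + s)
      ≤ (1 - p * (1 / (A * p)) + p * (p - 1) / 2 * (1 / (A * p)) ^ 2) * (A + s) :=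
        mul_le_mul_of_nonneg_right hquad (by linarith)
    _ = A - 1 + s - (2 * p * A * s - (p - 1) * (A + s)) / (2 * p * A ^ 2) := by
        field_simp
        ring
    _ < A - 1 + s := by
        have : 0 < (2 * p * A * s - (p - 1) * (A + s)) / (2 * p * A ^ 2) := by positivity
        linarith

lemma mul_rpow_inv_lt {n : ℕ} (hn : n ≠ 0) {q x y : ℝ} (hq : 0 ≤ q) (hy : 0 ≤ y)
    (h : q ^ n * y < x) : q * y ^ (n : ℝ)⁻¹ < x ^ (n : ℝ)⁻¹ := by
  rw [← Real.pow_rpow_inv_natCast hq hn, ← Real.mul_rpow (pow_nonneg hq n) hy]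
  exact Real.rpow_lt_rpow (by positivity) h (by positivity)

lemma f_mul_add {p b : ℕ} (hp : p.Prime) (hb : b < p) (a : ℕ) :
    f (a * p + b) p = rhoProd p a * (a + b / p : ℝ) ^ (p : ℝ)⁻¹ := by
  have hp' : (p : ℝ) ≠ 0 := by exact_mod_cast hp.ne_zero
  rw [f, rho_eq_rhoProd hp, mul_add_div_of_lt hb, Nat.totient_prime hp, Nat.cast_sub hp.one_le]
  congr 2
  · push_cast
    field_simp
  · field_simp
    ring

end CoprimeOrderPerm

open CoprimeOrderPerm

theorem stmt_8 (p : ℕ) (hp : p.Prime) (b : ℕ) (hb1 : (p - 1) / 2 < b) (hb2 : b ≤ p - 1) :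
    ∀ a : ℕ, ((p : ℝ) - 1) / 2 ≤ (a : ℝ) → f ((a + 1) * p + b) p < f (a * p + b) p := by
  intro a ha
  have hbp : b < p := by omega
  have hs : 1 / 2 ≤ (b / p : ℝ) := by
    have : (p : ℝ) ≤ 2 * b := by exact_mod_cast (by omega : p ≤ 2 * b)
    rw [le_div_iff₀ (by exact_mod_cast hp.pos)]
    linarith
  have hA : (p : ℝ) + 1 ≤ 2 * (a + 1) := by linarith
  rw [f_mul_add hp hbp, f_mul_add hp hbp, rhoProd_succ, mul_assoc]
  refine mul_lt_mul_of_pos_left ?_ (rhoProd_pos hp.two_le a)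
  push_cast
  refine mul_rpow_inv_lt hp.ne_zero (one_sub_one_div_mul_pos hp.two_le a).le (by positivity) ?_
  simpa using one_sub_pow_mul_lt hp.one_le hs hA
end

section
/- For every integer p ≥ 1 and every real number x > 1 with 2x ≥ p² + p, ((x−1)/x)^p < (2x − p)/(2x + p). -/
theorem stmt_10 (p : ℕ) (hp : 1 ≤ p) (x : ℝ) (hx : 1 < x) (hpx : (p : ℝ) ^ 2 + p ≤ 2 * x) :
    ((x - 1) / x) ^ p < (2 * x - p) / (2 * x + p) := by
  have hx0 : (0:ℝ) < x := by linarith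
  induction p, hp using Nat.le_induction with
  | base =>
    push_cast
    rw [pow_one, div_lt_div_iff₀ hx0 (by linarith)]
    nlinarith
  | succ p hp ih =>
    have hp1 : (1:ℝ) ≤ p := by exact_mod_cast hp
    push_cast at hpx ⊢
    have hpx' : (p:ℝ) ^ 2 + p ≤ 2 * x := by nlinarith
    have ih' := ih hpx'
    have hfrac : 0 < (x - 1) / x := div_pos (by linarith) hx0
    have hdp : (0:ℝ) < 2 * x + p := by linarith
    have hdp1 : (0:ℝ) < 2 * x + (p + 1) := by linarith
    have hnum : (0:ℝ) < 2 * x - p := by nlinarith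
    have key : ((x - 1) / x) * ((2 * x - p) / (2 * x + p))
        ≤ (2 * x - (p + 1)) / (2 * x + (p + 1)) := by
      rw [div_mul_div_comm, div_le_div_iff₀ (by positivity) hdp1]
      nlinarith
    calc ((x - 1) / x) ^ (p + 1) = ((x - 1) / x) * ((x - 1) / x) ^ p := by ring
      _ < ((x - 1) / x) * ((2 * x - p) / (2 * x + p)) := by
          exact mul_lt_mul_of_pos_left ih' hfrac
      _ ≤ (2 * x - (p + 1)) / (2 * x + (p + 1)) := key
end
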